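/- arXiv:1805.06719 — 2 statements merged into one kernel-verified Lean document; each statement's English description precedes it below -/
import Mathlib

section
/- The function r ↦ (r/(r−1))^r is decreasing on (1, ∞): for all real numbers r, s with 1 < r ≤ s, one has (s/(s−1))^s ≤ (r/(r−1))^r. -/
/-! Taking logarithms, it suffices that `f x = x * log (x / (x - 1))` is antitone on `(1, ∞)`.
Its derivative is `log (x / (x - 1)) - 1 / (x - 1)`, which is nonpositive because
`log u ≤ u - 1` at `u = x / (x - 1)`. -/

open Real Set

theorem hasDerivAt_mul_log_div_sub_one {x : ℝ} (hx : 1 < x) :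
    HasDerivAt (fun y : ℝ => y * log (y / (y - 1))) (log (x / (x - 1)) - (x - 1)⁻¹) x := by
  have hx₀ : x ≠ 0 := by positivity
  have hx₁ : x - 1 ≠ 0 := sub_ne_zero.mpr hx.ne'
  have hquot := (hasDerivAt_id' x).fun_div ((hasDerivAt_id' x).sub_const 1) hx₁
  refine ((hasDerivAt_id' x).fun_mul (hquot.log (div_ne_zero hx₀ hx₁))).congr_deriv ?_
  field_simp
  ring

theorem log_div_sub_one_le_inv_sub_one {x : ℝ} (hx : 1 < x) :
    log (x / (x - 1)) ≤ (x - 1)⁻¹ := by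
  have hx₁ : 0 < x - 1 := sub_pos.mpr hx
  calc log (x / (x - 1)) ≤ x / (x - 1) - 1 := log_le_sub_one_of_pos (by positivity)
    _ = (x - 1)⁻¹ := by field_simp; ring

theorem antitoneOn_mul_log_div_sub_one :
    AntitoneOn (fun x : ℝ => x * log (x / (x - 1))) (Ioi 1) := by
  refine antitoneOn_of_hasDerivWithinAt_nonpos (f' := fun x => log (x / (x - 1)) - (x - 1)⁻¹)
    (convex_Ioi 1)
    (fun x hx => (hasDerivAt_mul_log_div_sub_one hx).continuousAt.continuousWithinAt)
    (fun x hx => ?_) (fun x hx => ?_) <;> rw [interior_Ioi] at hx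
  · exact (hasDerivAt_mul_log_div_sub_one hx).hasDerivWithinAt
  · exact sub_nonpos.mpr (log_div_sub_one_le_inv_sub_one hx)

theorem div_sub_one_rpow_self_eq_exp {x : ℝ} (hx : 1 < x) :
    (x / (x - 1)) ^ x = exp (x * log (x / (x - 1))) := by
  rw [rpow_def_of_pos (div_pos (by positivity) (sub_pos.mpr hx)), mul_comm]

/-- **Monotonicity of the Doob constant.** The function `r ↦ (r/(r−1))^r` is
decreasing on `(1, ∞)`: for `1 < r ≤ s` one has `(s/(s−1))^s ≤ (r/(r−1))^r`. -/
theorem doob_constant_antitone (r s : ℝ) (hr : 1 < r) (hrs : r ≤ s) :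
    (s / (s - 1)) ^ s ≤ (r / (r - 1)) ^ r := by
  have hs : 1 < s := hr.trans_le hrs
  rw [div_sub_one_rpow_self_eq_exp hr, div_sub_one_rpow_self_eq_exp hs, exp_le_exp]
  exact antitoneOn_mul_log_div_sub_one hr hs hrs
end

section
/- Let m ≥ 1 be an integer, let κ₁, κ₂ be real numbers with κ₁ < m/2 + 1 and κ₂ < m/2 + 1, let h > 0, let σ < t be real numbers, and let x, y ∈ ℝ^m. Then ∫_σ^t ∫_{ℝ^m} (t − τ)^{−κ₁} exp(−h|x − ξ|² / (4(t − τ))) · (τ − σ)^{−κ₂} exp(−h|ξ − y|² / (4(τ − σ))) dξ dτ = (4π/h)^{m/2} B(m/2 − κ₁ + 1, m/2 − κ₂ + 1) (t − σ)^{m/2 + 1 − κ₁ − κ₂} exp(−h|x − y|² / (4(t − σ))), where B(·,·) denotes the Euler beta function. -/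
open MeasureTheory

open Real
open scoped RealInnerProductSpace

variable {V : Type*} [NormedAddCommGroup V] [InnerProductSpace ℝ V] [FiniteDimensional ℝ V]
  [MeasurableSpace V] [BorelSpace V]

lemma gauss_conv {a b : ℝ} (ha : 0 < a) (hb : 0 < b) (x y : V) :
    ∫ ξ : V, Real.exp (-(a * ‖x - ξ‖ ^ 2)) * Real.exp (-(b * ‖ξ - y‖ ^ 2)) =
      (Real.pi / (a + b)) ^ ((Module.finrank ℝ V : ℝ) / 2) *
        Real.exp (-(a * b / (a + b) * ‖x - y‖ ^ 2)) := by
  have hab : a + b ≠ 0 := by positivity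
  set c : V := (a / (a + b)) • x + (b / (a + b)) • y with hc
  have key : ∀ ξ : V, a * ‖x - ξ‖ ^ 2 + b * ‖ξ - y‖ ^ 2
      = (a + b) * ‖ξ - c‖ ^ 2 + a * b / (a + b) * ‖x - y‖ ^ 2 := by
    intro ξ
    have hξc : ⟪ξ, c⟫ = a / (a + b) * ⟪ξ, x⟫ + b / (a + b) * ⟪ξ, y⟫ := by
      simp [hc, inner_add_right, real_inner_smul_right]
    have hcc : ‖c‖ ^ 2 = (a / (a+b))^2 * ‖x‖^2 + 2 * (a/(a+b)) * (b/(a+b)) * ⟪x, y⟫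
        + (b / (a+b))^2 * ‖y‖^2 := by
      rw [← real_inner_self_eq_norm_sq]
      simp only [hc, inner_add_left, inner_add_right, real_inner_smul_left,
        real_inner_smul_right, real_inner_self_eq_norm_sq, real_inner_comm y x, norm_smul, Real.norm_eq_abs, mul_pow, sq_abs]
      ring
    rw [norm_sub_sq_real x ξ, norm_sub_sq_real ξ y, norm_sub_sq_real ξ c,
      norm_sub_sq_real x y, hξc, hcc, real_inner_comm ξ x]
    field_simp
    ring
  have step1 : ∀ ξ : V, Real.exp (-(a * ‖x - ξ‖ ^ 2)) * Real.exp (-(b * ‖ξ - y‖ ^ 2))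
      = Real.exp (-((a + b) * ‖ξ - c‖ ^ 2)) * Real.exp (-(a * b / (a + b) * ‖x - y‖ ^ 2)) := by
    intro ξ
    rw [← Real.exp_add, ← Real.exp_add]
    congr 1
    have := key ξ
    linarith
  simp only [step1]
  rw [MeasureTheory.integral_mul_const,
    MeasureTheory.integral_sub_right_eq_self (fun ξ : V => Real.exp (-((a + b) * ‖ξ‖ ^ 2))) c]
  have hI := GaussianFourier.integral_rexp_neg_mul_sq_norm (V := V) (show (0:ℝ) < a + b by positivity)
  simp only [neg_mul] at hI
  rw [hI, mul_comm]
open MeasureTheory Real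

lemma time_int (p q : ℝ) {σ t : ℝ} (hst : σ < t) :
    ∫ τ in Set.Ioo σ t, (t - τ) ^ p * (τ - σ) ^ q =
      (t - σ) ^ (p + q + 1) * ∫ s in (0:ℝ)..1, s ^ p * (1 - s) ^ q := by
  have hts : 0 < t - σ := sub_pos.2 hst
  have h1 : (∫ τ in Set.Ioo σ t, (t - τ) ^ p * (τ - σ) ^ q)
      = ∫ τ in σ..t, (t - τ) ^ p * (τ - σ) ^ q := by
    rw [intervalIntegral.integral_of_le hst.le, MeasureTheory.integral_Ioc_eq_integral_Ioo]
  have h2 := intervalIntegral.integral_comp_sub_mul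
    (a := 0) (b := 1) (fun τ => (t - τ) ^ p * (τ - σ) ^ q) hts.ne' t
  rw [show t - (t - σ) * 1 = σ by ring, show t - (t - σ) * 0 = t by ring] at h2
  have key : ∀ s ∈ Set.uIcc (0:ℝ) 1,
      (t - (t - (t - σ) * s)) ^ p * ((t - (t - σ) * s) - σ) ^ q
        = (t - σ) ^ (p + q) * (s ^ p * (1 - s) ^ q) := by
    intro s hs
    rw [Set.uIcc_of_le zero_le_one] at hs
    have hs0 : (0:ℝ) ≤ s := hs.1
    have hs1 : (0:ℝ) ≤ 1 - s := by linarith [hs.2]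
    rw [show t - (t - (t - σ) * s) = (t - σ) * s by ring,
      show (t - (t - σ) * s) - σ = (t - σ) * (1 - s) by ring,
      Real.mul_rpow hts.le hs0, Real.mul_rpow hts.le hs1, Real.rpow_add hts]
    ring
  rw [intervalIntegral.integral_congr key, intervalIntegral.integral_const_mul] at h2
  rw [h1, show (p + q + 1) = (p + q) + 1 by ring, Real.rpow_add hts, Real.rpow_one]
  rw [smul_eq_mul] at h2
  field_simp at h2 ⊢
  linarith [h2]


/-- The Euler beta function `B(a,b) = ∫₀¹ s^{a−1} (1−s)^{b−1} ds`. -/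
noncomputable def betaFn (a b : ℝ) : ℝ :=
  ∫ s in (0 : ℝ)..1, s ^ (a - 1) * (1 - s) ^ (b - 1)

/-- **Gaussian space–time convolution identity.** For `m ≥ 1`, `κ₁, κ₂ < m/2 + 1`,
`h > 0`, `σ < t` and `x, y ∈ ℝᵐ`, the space–time convolution of the two Gaussian
kernels equals
`(4π/h)^{m/2} B(m/2 − κ₁ + 1, m/2 − κ₂ + 1) (t − σ)^{m/2 + 1 − κ₁ − κ₂}`
times the Gaussian connecting `x` and `y`. -/
theorem gaussian_spacetime_convolution (m : ℕ) (hm : 1 ≤ m)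
    (κ₁ κ₂ : ℝ) (hκ₁ : κ₁ < (m : ℝ) / 2 + 1) (hκ₂ : κ₂ < (m : ℝ) / 2 + 1)
    (h : ℝ) (hh : 0 < h) (σ t : ℝ) (hst : σ < t)
    (x y : EuclideanSpace ℝ (Fin m)) :
    (∫ τ in Set.Ioo σ t, ∫ ξ : EuclideanSpace ℝ (Fin m),
        (t - τ) ^ (-κ₁) * Real.exp (-(h * ‖x - ξ‖ ^ 2) / (4 * (t - τ))) *
          ((τ - σ) ^ (-κ₂) * Real.exp (-(h * ‖ξ - y‖ ^ 2) / (4 * (τ - σ))))) =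
      (4 * Real.pi / h) ^ ((m : ℝ) / 2) *
        betaFn ((m : ℝ) / 2 - κ₁ + 1) ((m : ℝ) / 2 - κ₂ + 1) *
        (t - σ) ^ ((m : ℝ) / 2 + 1 - κ₁ - κ₂) *
        Real.exp (-(h * ‖x - y‖ ^ 2) / (4 * (t - σ))) := by
  have hts : 0 < t - σ := sub_pos.2 hst
  set M : ℝ := (m : ℝ) / 2 with hM
  set E : ℝ := Real.exp (-(h * ‖x - y‖ ^ 2) / (4 * (t - σ))) with hE
  have inner_eval : ∀ τ ∈ Set.Ioo σ t,
      (∫ ξ : EuclideanSpace ℝ (Fin m),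
        (t - τ) ^ (-κ₁) * Real.exp (-(h * ‖x - ξ‖ ^ 2) / (4 * (t - τ))) *
          ((τ - σ) ^ (-κ₂) * Real.exp (-(h * ‖ξ - y‖ ^ 2) / (4 * (τ - σ)))))
      = (4 * Real.pi / h) ^ M * (t - σ) ^ (-M) * E *
          ((t - τ) ^ (M - κ₁) * (τ - σ) ^ (M - κ₂)) := by
    intro τ hτ
    have hu : 0 < t - τ := sub_pos.2 hτ.2
    have hv : 0 < τ - σ := sub_pos.2 hτ.1
    set u := t - τ
    set v := τ - σ
    set a : ℝ := h / (4 * u) with ha'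
    set b : ℝ := h / (4 * v) with hb'
    have ha : 0 < a := by positivity
    have hb : 0 < b := by positivity
    have rear : ∀ ξ : EuclideanSpace ℝ (Fin m),
        u ^ (-κ₁) * Real.exp (-(h * ‖x - ξ‖ ^ 2) / (4 * u)) *
          (v ^ (-κ₂) * Real.exp (-(h * ‖ξ - y‖ ^ 2) / (4 * v)))
        = (u ^ (-κ₁) * v ^ (-κ₂)) *
            (Real.exp (-(a * ‖x - ξ‖ ^ 2)) * Real.exp (-(b * ‖ξ - y‖ ^ 2))) := by
      intro ξ
      rw [show -(h * ‖x - ξ‖ ^ 2) / (4 * u) = -(a * ‖x - ξ‖ ^ 2) by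
            rw [ha', div_mul_eq_mul_div, neg_div],
          show -(h * ‖ξ - y‖ ^ 2) / (4 * v) = -(b * ‖ξ - y‖ ^ 2) by
            rw [hb', div_mul_eq_mul_div, neg_div]]
      ring
    simp only [rear]
    rw [MeasureTheory.integral_const_mul, gauss_conv ha hb x y]
    have hab_sum : a + b = h * (t - σ) / (4 * (u * v)) := by
      rw [ha', hb']
      rw [div_add_div _ _ (by positivity) (by positivity)]
      rw [show t - σ = u + v by simp [u, v]]
      rw [div_eq_div_iff (by positivity) (by positivity)]
      ring
    have h1 : Real.pi / (a + b) = (4 * Real.pi / h) * (u * (v * (t - σ)⁻¹)) := by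
      rw [hab_sum]
      field_simp
    have h2 : -(a * b / (a + b) * ‖x - y‖ ^ 2) = -(h * ‖x - y‖ ^ 2) / (4 * (t - σ)) := by
      rw [hab_sum, ha', hb']
      field_simp
      try ring
    rw [h1, h2, finrank_euclideanSpace_fin, ← hM, ← hE,
      Real.mul_rpow (by positivity) (by positivity),
      Real.mul_rpow (by positivity) (by positivity),
      Real.mul_rpow (by positivity) (by positivity),
      Real.inv_rpow hts.le, ← Real.rpow_neg hts.le,
      show M - κ₁ = -κ₁ + M by ring, show M - κ₂ = -κ₂ + M by ring,
      Real.rpow_add hu, Real.rpow_add hv]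
    ring
  have hpow : (t - σ) ^ (-M) * (t - σ) ^ ((M - κ₁) + (M - κ₂) + 1)
      = (t - σ) ^ (M + 1 - κ₁ - κ₂) := by
    rw [← Real.rpow_add hts]; congr 1; ring
  have hbeta : betaFn (M - κ₁ + 1) (M - κ₂ + 1)
      = ∫ s in (0:ℝ)..1, s ^ (M - κ₁) * (1 - s) ^ (M - κ₂) := by
    unfold betaFn; norm_num
  rw [MeasureTheory.setIntegral_congr_fun measurableSet_Ioo inner_eval,
    MeasureTheory.integral_const_mul, time_int (M - κ₁) (M - κ₂) hst, ← hbeta, ← hpow]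
  ring
end
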